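/- A finite integral connectivity space X is distinguished (every nonempty connected set is irreducible) if and only if its generic graph G_X contains no triple of distinct vertices (a,b,c) with edges a → b and c → b; consequently X is connected and distinguished if and only if G_X is a directed tree. -/

import Mathlib

def IsConnStruct {X : Type*} (κ : Set (Set X)) : Prop :=
  ∅ ∈ κ ∧ ∀ I : Set (Set X), I ⊆ κ → (⋂₀ I).Nonempty → ⋃₀ I ∈ κ

def IsIntConnStruct {X : Type*} (κ : Set (Set X)) : Prop :=
  IsConnStruct κ ∧ ∀ x : X, {x} ∈ κ

/-- a generic point: a nonempty irreducible connected set, i.e. a nonempty connected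
set which is not the union of a family of proper connected subsets with nonempty
intersection -/
def GenericPt {X : Type*} (κ : Set (Set X)) (K : Set X) : Prop :=
  K ∈ κ ∧ K.Nonempty ∧
    ¬ ∃ E : Set (Set X), E ⊆ κ ∧ (∀ A ∈ E, A ⊂ K) ∧ (⋂₀ E).Nonempty ∧ ⋃₀ E = K

/-- directed edge `g → h` of the generic graph: `g ⊋ h` with no generic point strictly
between -/
def GenEdge {X : Type*} (κ : Set (Set X)) (g h : Set X) : Prop :=
  GenericPt κ g ∧ GenericPt κ h ∧ h ⊂ g ∧
    ¬ ∃ k : Set X, GenericPt κ k ∧ h ⊂ k ∧ k ⊂ g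

section Aux

variable {X : Type*} [Finite X] [Nonempty X] {κ : Set (Set X)}

lemma aux_exists_max (S : Set (Set X)) (h : S.Nonempty) :
    ∃ m ∈ S, ∀ a ∈ S, m ⊆ a → a = m := by
  obtain ⟨m, hm, hmax⟩ := Set.Finite.exists_maximalFor id S (Set.toFinite S) h
  exact ⟨m, hm, fun a ha hma => le_antisymm (hmax ha hma) hma⟩

lemma aux_exists_min (S : Set (Set X)) (h : S.Nonempty) :
    ∃ m ∈ S, ∀ a ∈ S, a ⊆ m → a = m := by
  obtain ⟨m, hm, hmin⟩ := Set.Finite.exists_minimalFor id S (Set.toFinite S) h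
  exact ⟨m, hm, fun a ha ham => le_antisymm ham (hmin ha ham)⟩

lemma aux_union_mem (hκ : IsIntConnStruct κ) {a b : Set X} (ha : a ∈ κ) (hb : b ∈ κ)
    (hab : (a ∩ b).Nonempty) : a ∪ b ∈ κ := by
  have := hκ.1.2 {a, b} (by rintro s (rfl | rfl); exacts [ha, hb])
    (by rwa [Set.sInter_pair])
  rwa [Set.sUnion_pair] at this

lemma aux_singleton_generic (hκ : IsIntConnStruct κ) (x : X) : GenericPt κ {x} := by
  refine ⟨hκ.2 x, ⟨x, rfl⟩, ?_⟩
  rintro ⟨E, -, hprop, -, huni⟩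
  have hx : x ∈ ⋃₀ E := by rw [huni]; exact rfl
  obtain ⟨A, hA, hxA⟩ := hx
  exact (hprop A hA).2 (Set.singleton_subset_iff.2 hxA)

lemma aux_not_generic_union (hκ : IsIntConnStruct κ) {P Q : Set X} (hP : P ∈ κ) (hQ : Q ∈ κ)
    (hPQ : ¬P ⊆ Q) (hQP : ¬Q ⊆ P) (hne : (P ∩ Q).Nonempty) : ¬ GenericPt κ (P ∪ Q) := by
  rintro ⟨-, -, hno⟩
  refine hno ⟨{P, Q}, ?_, ?_, ?_, Set.sUnion_pair P Q⟩
  · rintro s (rfl | rfl); exacts [hP, hQ]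
  · rintro A (rfl | rfl)
    · exact Set.subset_union_left.ssubset_of_ne
        (fun h => hQP (by rw [h]; exact Set.subset_union_right))
    · exact Set.subset_union_right.ssubset_of_ne
        (fun h => hPQ (by rw [h]; exact Set.subset_union_left))
  · rwa [Set.sInter_pair]

lemma aux_no_merge (hκ : IsIntConnStruct κ) (hdist : ∀ K ∈ κ, K.Nonempty → GenericPt κ K) :
    ¬ ∃ a b c : Set X, a ≠ b ∧ a ≠ c ∧ b ≠ c ∧ GenEdge κ a b ∧ GenEdge κ c b := by
  rintro ⟨a, b, c, hab, hac, hbc, ⟨hag, hbg, hba, hnk1⟩, ⟨hcg, -, hbc', hnk2⟩⟩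
  have hca : ¬ c ⊆ a := fun h => hnk1 ⟨c, hcg, hbc', h.ssubset_of_ne hac.symm⟩
  have hacs : ¬ a ⊆ c := fun h => hnk2 ⟨a, hag, hba, h.ssubset_of_ne hac⟩
  obtain ⟨y, hy⟩ := hbg.2.1
  have hyac : y ∈ a ∩ c := ⟨hba.1 hy, hbc'.1 hy⟩
  have hmem : a ∪ c ∈ κ := aux_union_mem hκ hag.1 hcg.1 ⟨y, hyac⟩
  exact aux_not_generic_union hκ hag.1 hcg.1 hacs hca ⟨y, hyac⟩
    (hdist _ hmem ⟨y, Or.inl hyac.1⟩)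

/-- key: non-distinguished gives a merging triple -/
lemma aux_triple (hκ : IsIntConnStruct κ)
    (hnd : ¬ ∀ K ∈ κ, K.Nonempty → GenericPt κ K) :
    ∃ a b c : Set X, a ≠ b ∧ a ≠ c ∧ b ≠ c ∧ GenEdge κ a b ∧ GenEdge κ c b := by
  push_neg at hnd
  obtain ⟨K₀, hK₀κ, hK₀ne, hK₀ng⟩ := hnd
  obtain ⟨K, ⟨hKκ, hKne, hKng⟩, hKmin⟩ :=
    aux_exists_min {K | K ∈ κ ∧ K.Nonempty ∧ ¬ GenericPt κ K} ⟨K₀, hK₀κ, hK₀ne, hK₀ng⟩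
  have hE : ∃ E : Set (Set X), E ⊆ κ ∧ (∀ A ∈ E, A ⊂ K) ∧ (⋂₀ E).Nonempty ∧ ⋃₀ E = K := by
    by_contra h
    exact hKng ⟨hKκ, hKne, h⟩
  obtain ⟨E, hEκ, hEprop, ⟨x, hx⟩, hEuni⟩ := hE
  have hxK : x ∈ K := by
    obtain ⟨z, hz⟩ := hKne
    rw [← hEuni] at hz
    obtain ⟨A, hA, -⟩ := hz
    exact (hEprop A hA).1 (hx A hA)
  -- maximal generic subset of K containing x
  obtain ⟨b, ⟨hbgen, hxb, hbK⟩, hbmax⟩ :=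
    aux_exists_max {g | GenericPt κ g ∧ x ∈ g ∧ g ⊆ K}
      ⟨{x}, aux_singleton_generic hκ x, rfl, Set.singleton_subset_iff.2 hxK⟩
  have hbne : b ≠ K := fun h => hKng (h ▸ hbgen)
  obtain ⟨y, hyK, hyb⟩ := Set.exists_of_ssubset (hbK.ssubset_of_ne hbne)
  rw [← hEuni] at hyK
  obtain ⟨A, hAE, hyA⟩ := hyK
  have hAsub : A ⊂ K := hEprop A hAE
  have hxA : x ∈ A := hx A hAE
  have hAgen : GenericPt κ A := by
    by_contra h
    exact hAsub.ne (hKmin A ⟨hEκ hAE, ⟨x, hxA⟩, h⟩ hAsub.1)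
  have hnAb : ¬ A ⊆ b := fun h => hyb (h hyA)
  have hnbA : ¬ b ⊆ A := fun h => hyb ((hbmax A ⟨hAgen, hxA, hAsub.1⟩ h) ▸ hyA)
  -- maximal generic subset of b ∩ A, then minimal generic sets above it inside b and A
  obtain ⟨d, ⟨hdgen, hdsub⟩, hdmax⟩ :=
    aux_exists_max {g | GenericPt κ g ∧ g ⊆ b ∩ A}
      ⟨{x}, aux_singleton_generic hκ x, Set.singleton_subset_iff.2 ⟨hxb, hxA⟩⟩
  have hdb : d ⊂ b := (hdsub.trans Set.inter_subset_left).ssubset_of_ne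
    (fun h => hnbA (h ▸ hdsub.trans Set.inter_subset_right))
  have hdA : d ⊂ A := (hdsub.trans Set.inter_subset_right).ssubset_of_ne
    (fun h => hnAb (h ▸ hdsub.trans Set.inter_subset_left))
  obtain ⟨g, ⟨hggen, hdg, hgb⟩, hgmin⟩ :=
    aux_exists_min {g | GenericPt κ g ∧ d ⊂ g ∧ g ⊆ b} ⟨b, hbgen, hdb, subset_rfl⟩
  obtain ⟨h, ⟨hhgen, hdh, hhA⟩, hhmin⟩ :=
    aux_exists_min {g | GenericPt κ g ∧ d ⊂ g ∧ g ⊆ A} ⟨A, hAgen, hdA, subset_rfl⟩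
  have hedge1 : GenEdge κ g d := ⟨hggen, hdgen, hdg, by
    rintro ⟨k, hkgen, hdk, hkg⟩
    exact hkg.ne (hgmin k ⟨hkgen, hdk, hkg.1.trans hgb⟩ hkg.1)⟩
  have hedge2 : GenEdge κ h d := ⟨hhgen, hdgen, hdh, by
    rintro ⟨k, hkgen, hdk, hkh⟩
    exact hkh.ne (hhmin k ⟨hkgen, hdk, hkh.1.trans hhA⟩ hkh.1)⟩
  have hgh : g ≠ h := by
    intro h'
    have hsub : g ⊆ b ∩ A := Set.subset_inter hgb (h' ▸ hhA)
    exact hdg.ne' (hdmax g ⟨hggen, hsub⟩ hdg.1)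
  exact ⟨g, d, h, hdg.ne', hgh, hdh.ne, hedge1, hedge2⟩

end Aux

/-- a finite integral connectivity space is distinguished iff its generic
graph has no triple of distinct vertices `(a,b,c)` with edges `a → b` and `c → b`;
consequently it is connected and distinguished iff its generic graph is a directed
tree (a unique source, and every vertex has at most one incoming edge). -/
theorem distinguished_iff_no_merging {X : Type*} [Finite X] [Nonempty X]
    (κ : Set (Set X)) (hκ : IsIntConnStruct κ) :
    ((∀ K ∈ κ, K.Nonempty → GenericPt κ K) ↔
      ¬ ∃ a b c : Set X, a ≠ b ∧ a ≠ c ∧ b ≠ c ∧ GenEdge κ a b ∧ GenEdge κ c b) ∧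
    ((Set.univ ∈ κ ∧ ∀ K ∈ κ, K.Nonempty → GenericPt κ K) ↔
      ((∃! r : {K : Set X // GenericPt κ K},
          ∀ u : {K : Set X // GenericPt κ K}, ¬ GenEdge κ u.1 r.1) ∧
        (∀ v u w : {K : Set X // GenericPt κ K},
          GenEdge κ u.1 v.1 → GenEdge κ w.1 v.1 → u = w))) := by
  constructor
  · constructor
    · exact fun hd => aux_no_merge hκ hd
    · intro hno
      by_contra hnd
      exact hno (aux_triple hκ hnd)
  · constructor
    · rintro ⟨huniv, hdist⟩
      have hug : GenericPt κ (Set.univ : Set X) :=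
        hdist _ huniv ⟨Classical.arbitrary X, trivial⟩
      refine ⟨⟨⟨Set.univ, hug⟩, ?_, ?_⟩, ?_⟩
      · rintro u ⟨-, -, hsub, -⟩
        exact hsub.2 (Set.subset_univ _)
      · rintro r' hr'
        apply Subtype.ext
        by_contra hne
        have hss : r'.1 ⊂ Set.univ := (Set.subset_univ _).ssubset_of_ne hne
        obtain ⟨g, ⟨hggen, hrg⟩, hgmin⟩ :=
          aux_exists_min {g | GenericPt κ g ∧ r'.1 ⊂ g} ⟨Set.univ, hug, hss⟩
        exact hr' ⟨g, hggen⟩ ⟨hggen, r'.2, hrg, by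
          rintro ⟨k, hk, hrk, hkg⟩
          exact hkg.ne (hgmin k ⟨hk, hrk⟩ hkg.1)⟩
      · intro v u w hu hw
        by_contra hne
        exact aux_no_merge hκ hdist
          ⟨u.1, v.1, w.1, hu.2.2.1.ne', fun h => hne (Subtype.ext h), hw.2.2.1.ne, hu, hw⟩
    · rintro ⟨⟨r, hrsrc, hruniq⟩, hdeg⟩
      have hdist : ∀ K ∈ κ, K.Nonempty → GenericPt κ K := by
        by_contra hnd
        obtain ⟨a, b, c, hab, hac, hbc, he1, he2⟩ := aux_triple hκ hnd
        exact hac (congrArg Subtype.val (hdeg ⟨b, he1.2.1⟩ ⟨a, he1.1⟩ ⟨c, he2.1⟩ he1 he2))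
      refine ⟨?_, hdist⟩
      have huniv : r.1 = Set.univ := by
        ext y
        simp only [Set.mem_univ, iff_true]
        obtain ⟨M, ⟨hMgen, hyM⟩, hMmax⟩ :=
          aux_exists_max {g | GenericPt κ g ∧ y ∈ g}
            ⟨{y}, aux_singleton_generic hκ y, rfl⟩
        have hMr : (⟨M, hMgen⟩ : {K : Set X // GenericPt κ K}) = r := by
          apply hruniq
          rintro u ⟨-, -, hMu, -⟩
          exact hMu.ne' (hMmax u.1 ⟨u.2, hMu.1 hyM⟩ hMu.1)
        rw [← congrArg Subtype.val hMr]
        exact hyM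
      rw [← huniv]
      exact r.2.1
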